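/- In the transformed Prisoner's Dilemma, the asymmetric profile (C,D) (and symmetrically (D,C)) is a pure-strategy Nash equilibrium of the subjective game if and only if w_max ≤ w ≤ w_min, where w = b/a, w_min = (T−R)/(R−S) and w_max = (P−S)/(T−P). In particular, if w_max < w < w_min then the only pure-strategy Nash equilibria are the asymmetric profiles (C,D) and (D,C). -/

import Mathlib

/-- Pure strategies in the Prisoner's Dilemma. -/
inductive Strategy : Type
  | C : Strategy
  | D : Strategy
deriving DecidableEq

open Strategy

/-- Objective payoff of the row player when she plays `s` against `t`:
`R` at (C,C), `P` at (D,D), `S` for the cooperator and `T` for the defector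
at an asymmetric profile. -/
def payoff (T R P S : ℝ) : Strategy → Strategy → ℝ
  | C, C => R
  | C, D => S
  | D, C => T
  | D, D => P

/-- Subjective utility of a player who plays `s` against `t`:
`u'_i = a·u_i + b·u_j`. -/
def subj (T R P S a b : ℝ) (s t : Strategy) : ℝ :=
  a * payoff T R P S s t + b * payoff T R P S t s

/-- `(s, t)` is a pure-strategy Nash equilibrium of the subjective game:
no player can strictly increase her subjective utility by a unilateral deviation. -/
def IsNash (T R P S a b : ℝ) (s t : Strategy) : Prop :=
  (∀ s' : Strategy, subj T R P S a b s' t ≤ subj T R P S a b s t) ∧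
  (∀ t' : Strategy, subj T R P S a b t' s ≤ subj T R P S a b t s)

/-! With only two strategies, being a best response is a single comparison against the other
strategy. Cooperating against a defector is a best response exactly when `w ≥ w_max`, and
defecting against a cooperator exactly when `w ≤ w_min`; the strict inequalities make `D` the
unique best response to `C` and `C` the unique best response to `D`, so neither symmetric
profile is an equilibrium. -/

def IsBestResponse (T R P S a b : ℝ) (s t : Strategy) : Prop :=
  ∀ s' : Strategy, subj T R P S a b s' t ≤ subj T R P S a b s t

section BestResponse

variable {T R P S a b : ℝ}

theorem isNash_iff {s t : Strategy} :
    IsNash T R P S a b s t ↔ IsBestResponse T R P S a b s t ∧ IsBestResponse T R P S a b t s :=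
  Iff.rfl

theorem isBestResponse_iff_of_ne {s s' t : Strategy} (h : s' ≠ s) :
    IsBestResponse T R P S a b s t ↔ subj T R P S a b s' t ≤ subj T R P S a b s t := by
  refine ⟨fun hs => hs s', fun hs s'' => ?_⟩
  cases s <;> cases s' <;> cases s'' <;> first | exact le_rfl | exact hs | exact absurd rfl h

theorem isBestResponse_C_D_iff (ha : 0 < a) (hPT : P < T) :
    IsBestResponse T R P S a b C D ↔ (P - S) / (T - P) ≤ b / a := by
  rw [isBestResponse_iff_of_ne (s' := D) (by decide), div_le_div_iff₀ (sub_pos.2 hPT) ha]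
  simp only [subj, payoff]
  constructor <;> intro h <;> linarith

theorem isBestResponse_D_C_iff (ha : 0 < a) (hSR : S < R) :
    IsBestResponse T R P S a b D C ↔ b / a ≤ (T - R) / (R - S) := by
  rw [isBestResponse_iff_of_ne (s' := C) (by decide), div_le_div_iff₀ ha (sub_pos.2 hSR)]
  simp only [subj, payoff]
  constructor <;> intro h <;> linarith

theorem not_isBestResponse_C_C (ha : 0 < a) (hSR : S < R) (h : b / a < (T - R) / (R - S)) :
    ¬ IsBestResponse T R P S a b C C := by
  rw [isBestResponse_iff_of_ne (s' := D) (by decide), not_le]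
  rw [div_lt_div_iff₀ ha (sub_pos.2 hSR)] at h
  simp only [subj, payoff]
  linarith

theorem not_isBestResponse_D_D (ha : 0 < a) (hPT : P < T) (h : (P - S) / (T - P) < b / a) :
    ¬ IsBestResponse T R P S a b D D := by
  rw [isBestResponse_iff_of_ne (s' := C) (by decide), not_le]
  rw [div_lt_div_iff₀ (sub_pos.2 hPT) ha] at h
  simp only [subj, payoff]
  linarith

end BestResponse

theorem asymmetric_nash_iff_general (T R P S a b : ℝ)
    (hTR : T > R) (hRP : R > P) (hPS : P > S)
    (ha : a > 0) :
    (IsNash T R P S a b Strategy.C Strategy.D ↔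
      (P - S) / (T - P) ≤ b / a ∧ b / a ≤ (T - R) / (R - S)) ∧
    (IsNash T R P S a b Strategy.D Strategy.C ↔
      (P - S) / (T - P) ≤ b / a ∧ b / a ≤ (T - R) / (R - S)) ∧
    ((P - S) / (T - P) < b / a ∧ b / a < (T - R) / (R - S) →
      ∀ s t : Strategy, IsNash T R P S a b s t ↔
        ((s = Strategy.C ∧ t = Strategy.D) ∨ (s = Strategy.D ∧ t = Strategy.C))) := by
  have hPT : P < T := by linarith
  have hSR : S < R := by linarith
  have hCD : IsNash T R P S a b C D ↔ (P - S) / (T - P) ≤ b / a ∧ b / a ≤ (T - R) / (R - S) := by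
    rw [isNash_iff, isBestResponse_C_D_iff ha hPT, isBestResponse_D_C_iff ha hSR]
  have hDC : IsNash T R P S a b D C ↔ (P - S) / (T - P) ≤ b / a ∧ b / a ≤ (T - R) / (R - S) := by
    rw [isNash_iff, and_comm, isBestResponse_C_D_iff ha hPT, isBestResponse_D_C_iff ha hSR]
  refine ⟨hCD, hDC, fun ⟨hlo, hhi⟩ s t => ?_⟩
  cases s <;> cases t
  · simpa [isNash_iff] using not_isBestResponse_C_C ha hSR hhi
  · simpa [hCD] using ⟨hlo.le, hhi.le⟩
  · simpa [hDC] using ⟨hlo.le, hhi.le⟩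
  · simpa [isNash_iff] using not_isBestResponse_D_D ha hPT hlo

/-- the asymmetric profile (C,D) (and symmetrically (D,C)) is a
Nash equilibrium of the subjective game iff `w_max ≤ w ≤ w_min`, where
`w = b/a`, `w_min = (T−R)/(R−S)`, `w_max = (P−S)/(T−P)`.  In particular, if
`w_max < w < w_min` then the only pure-strategy Nash equilibria are the
asymmetric profiles (C,D) and (D,C). -/
theorem asymmetric_nash_iff (T R P S a b : ℝ)
    (hTR : T > R) (hRP : R > P) (hPS : P > S)
    (ha : a > 0) (hb : b ≥ 0) :
    (IsNash T R P S a b Strategy.C Strategy.D ↔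
      (P - S) / (T - P) ≤ b / a ∧ b / a ≤ (T - R) / (R - S)) ∧
    (IsNash T R P S a b Strategy.D Strategy.C ↔
      (P - S) / (T - P) ≤ b / a ∧ b / a ≤ (T - R) / (R - S)) ∧
    ((P - S) / (T - P) < b / a ∧ b / a < (T - R) / (R - S) →
      ∀ s t : Strategy, IsNash T R P S a b s t ↔
        ((s = Strategy.C ∧ t = Strategy.D) ∨ (s = Strategy.D ∧ t = Strategy.C))) :=
  asymmetric_nash_iff_general T R P S a b hTR hRP hPS ha
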